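/- Let ν be a singular cardinal of uncountable cofinality in V which acquires countable cofinality in a larger universe (abstractly: let ν⁺ be a regular cardinal and let T₀, T₁ partition the limit ordinals below ν⁺, with every ordinal in T₁ of countable cofinality). Suppose that for each pair (λ, i) with λ < ν regular and i < ν there is a partial square sequence ⟨C^{λ,i}_γ : γ ∈ S^{λ,i}⟩ such that T₀ ⊆ ⋃_{λ,i} S^{λ,i}. Then there is a □*_ν-sequence on ν⁺: namely, assigning to each γ ∈ T₀ the set 𝒞_γ = {C^{λ,i}_{γ'} ∩ γ : γ a limit point of C^{λ,i}_{γ'}} and to each γ ∈ T₁ a single cofinal ω-sequence yields a coherent sequence with |𝒞_γ| ≤ ν for all γ. -/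

import Mathlib

universe u

/-- `C` is club in `δ`: unbounded in `δ` and closed under suprema of its
bounded subsets. -/
def IsClubIn (C : Set Ordinal.{u}) (δ : Ordinal.{u}) : Prop :=
  (∀ a < δ, ∃ b ∈ C, a ≤ b ∧ b < δ) ∧
  (∀ a < δ, a ≠ 0 → a = sSup (C ∩ Set.Iio a) → a ∈ C)

/-- `β` is a limit point of `c`. -/
def IsLimPt (β : Ordinal.{u}) (c : Set Ordinal.{u}) : Prop :=
  β ≠ 0 ∧ β = sSup (c ∩ Set.Iio β)

/-- The order type of a set of ordinals. -/
noncomputable def otp (s : Set Ordinal.{u}) : Ordinal.{u + 1} :=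
  Ordinal.type (Subrel ((· < ·) : Ordinal.{u} → Ordinal.{u} → Prop) (· ∈ s))

/-!
On `T₀` take, at each `γ`, the initial segments `C^{λ,i}_{γ'} ∩ γ` of the partial square
clubs having `γ` as a limit point; on countable cofinality points add one cofinal `ω`-sequence.
Initial segments of initial segments are again such initial segments, and an `ω`-sequence has
no limit points below its supremum, so the family is coherent. Coherence of a single partial
square makes `C^{λ,i}_{γ'} ∩ γ` independent of `γ'`, so each pair `(λ, i)` contributes at most
one club at `γ`, and there are only `ν · ν = ν` pairs.
-/

open Set Cardinal Ordinal Order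

universe v

theorem otp_mono {s t : Set Ordinal.{u}} (h : s ⊆ t) : otp s ≤ otp t := by
  rw [otp, otp, type_le_iff']
  exact ⟨⟨⟨inclusion h, inclusion_injective h⟩, Iff.rfl⟩⟩

theorem otp_range_eq_omega0 {g : ℕ → Ordinal.{u}} (hg : StrictMono g) : otp (range g) = ω := by
  rw [otp, ← Ordinal.lift_id (type _), omega0]
  exact Ordinal.lift_type_eq.{u + 1, 0, u + 1}.2 ⟨(hg.orderIso g).toRelIsoLT.symm⟩

section LimitPoints

variable {c : Set Ordinal.{u}} {a β γ δ : Ordinal.{u}}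

theorem isLimPt_inter_Iio_iff (h : β ≤ γ) : IsLimPt β (c ∩ Iio γ) ↔ IsLimPt β c := by
  simp only [IsLimPt, inter_assoc, Iio_inter_Iio, min_eq_right h]

theorem IsLimPt.exists_mem_of_lt (h : IsLimPt γ c) (ha : a < γ) : ∃ b ∈ c, a ≤ b ∧ b < γ := by
  rw [h.2] at ha
  obtain ⟨b, ⟨hb, hbγ⟩, hab⟩ := exists_lt_of_lt_csSup' ha
  exact ⟨b, hb, hab.le, hbγ⟩

theorem not_isLimPt_of_finite (h : (c ∩ Iio β).Finite) : ¬IsLimPt β c := by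
  rintro ⟨hβ, hsup⟩
  rcases (c ∩ Iio β).eq_empty_or_nonempty with hempty | hne
  · rw [hempty, csSup_empty] at hsup
    exact hβ hsup
  · have hmem := (hne.csSup_mem h).2
    rw [← hsup] at hmem
    exact lt_irrefl β hmem

theorem IsClubIn.isLimPt (h : IsClubIn c γ) (hγ : IsSuccLimit γ) : IsLimPt γ c := by
  refine ⟨hγ.ne_bot, le_antisymm (le_of_forall_lt fun a ha => ?_) (csSup_le' fun x hx => hx.2.le)⟩
  obtain ⟨b, hb, hab, hbγ⟩ := h.1 (succ a) (hγ.succ_lt ha)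
  exact (lt_succ a).trans_le (hab.trans (le_csSup ⟨γ, fun x hx => hx.2.le⟩ ⟨hb, hbγ⟩))

theorem IsClubIn.inter_Iio (hc : IsClubIn c δ) (hγδ : γ ≤ δ) (hγ : IsLimPt γ c) :
    IsClubIn (c ∩ Iio γ) γ := by
  refine ⟨fun a ha => ?_, fun a ha ha0 hsup => ⟨?_, ha⟩⟩
  · obtain ⟨b, hb, hab, hbγ⟩ := hγ.exists_mem_of_lt ha
    exact ⟨b, ⟨hb, hbγ⟩, hab, hbγ⟩
  · have hlim : IsLimPt a c := (isLimPt_inter_Iio_iff ha.le).1 ⟨ha0, hsup⟩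
    exact hc.2 a (ha.trans_le hγδ) ha0 hlim.2

end LimitPoints

section OmegaSequences

theorem exists_strictMono_nat_cofinal {γ : Ordinal.{u}} (h : γ.cof = ℵ₀) :
    ∃ g : ℕ → Ordinal.{u}, StrictMono g ∧ (∀ n, g n < γ) ∧ ∀ a < γ, ∃ n, a ≤ g n := by
  obtain ⟨f, hf⟩ := exists_isFundamentalSeq (o := γ) (a := ω) (by rw [h, ord_aleph0])
  refine ⟨fun n => f ⟨n, natCast_lt_omega0 n⟩,
    fun m n hmn => hf.strictMono (Subtype.mk_lt_mk.2 (Nat.cast_lt.2 hmn)), fun n => (f _).2,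
    fun a ha => ?_⟩
  obtain ⟨_, ⟨⟨i, hi⟩, rfl⟩, hai⟩ := hf.isCofinal_range ⟨a, ha⟩
  obtain ⟨n, rfl⟩ := lt_omega0.1 hi
  exact ⟨n, hai⟩

variable {g : ℕ → Ordinal.{u}} {γ : Ordinal.{u}} (hg : StrictMono g)
  (hcofinal : ∀ a < γ, ∃ n, a ≤ g n)
include hg hcofinal

theorem not_isLimPt_range_of_lt {β : Ordinal.{u}} (hβ : β < γ) : ¬IsLimPt β (range g) := by
  obtain ⟨k, hk⟩ := hcofinal β hβ
  refine not_isLimPt_of_finite (((finite_Iio k).image g).subset ?_)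
  rintro _ ⟨⟨n, rfl⟩, hn⟩
  exact ⟨n, hg.lt_iff_lt.1 (hn.trans_le hk), rfl⟩

theorem isClubIn_range (hlt : ∀ n, g n < γ) : IsClubIn (range g) γ := by
  refine ⟨fun a ha => ?_, fun a ha ha0 hsup => ?_⟩
  · obtain ⟨n, hn⟩ := hcofinal a ha
    exact ⟨g n, mem_range_self n, hn, hlt n⟩
  · exact (not_isLimPt_range_of_lt hg hcofinal ha ⟨ha0, hsup⟩).elim

end OmegaSequences

noncomputable def omegaSeq (γ : Ordinal.{u}) : ℕ → Ordinal.{u} :=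
  if h : γ.cof = ℵ₀ then (exists_strictMono_nat_cofinal h).choose else fun _ => 0

theorem omegaSeq_spec {γ : Ordinal.{u}} (h : γ.cof = ℵ₀) :
    StrictMono (omegaSeq γ) ∧ (∀ n, omegaSeq γ n < γ) ∧ ∀ a < γ, ∃ n, a ≤ omegaSeq γ n := by
  rw [omegaSeq, dif_pos h]
  exact (exists_strictMono_nat_cofinal h).choose_spec

def omegaClubs (γ : Ordinal.{u}) : Set (Set Ordinal.{u}) :=
  {c | γ.cof = ℵ₀ ∧ c = range (omegaSeq γ)}

theorem omegaClubs_subsingleton (γ : Ordinal.{u}) : (omegaClubs γ).Subsingleton := by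
  rintro _ ⟨-, rfl⟩ _ ⟨-, rfl⟩
  rfl

theorem isClubIn_of_mem_omegaClubs {γ : Ordinal.{u}} {c : Set Ordinal.{u}}
    (hc : c ∈ omegaClubs γ) : IsClubIn c γ := by
  obtain ⟨hcof, rfl⟩ := hc
  obtain ⟨hg, hlt, hcofinal⟩ := omegaSeq_spec hcof
  exact isClubIn_range hg hcofinal hlt

theorem otp_eq_omega0_of_mem_omegaClubs {γ : Ordinal.{u}} {c : Set Ordinal.{u}}
    (hc : c ∈ omegaClubs γ) : otp c = ω := by
  obtain ⟨hcof, rfl⟩ := hc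
  exact otp_range_eq_omega0 (omegaSeq_spec hcof).1

theorem not_isLimPt_of_mem_omegaClubs {γ β : Ordinal.{u}} {c : Set Ordinal.{u}}
    (hc : c ∈ omegaClubs γ) (hβ : β < γ) : ¬IsLimPt β c := by
  obtain ⟨hcof, rfl⟩ := hc
  obtain ⟨hg, -, hcofinal⟩ := omegaSeq_spec hcof
  exact not_isLimPt_range_of_lt hg hcofinal hβ

/-- The contribution of the partial square `⟨D γ' : γ' ∈ S⟩` to `𝒞_γ`. -/
def tracesAt (D : Ordinal.{u} → Set Ordinal.{u}) (S : Set Ordinal.{u}) (γ : Ordinal.{u}) :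
    Set (Set Ordinal.{u}) :=
  {c | ∃ γ' ∈ S, γ ≤ γ' ∧ IsLimPt γ (D γ') ∧ c = D γ' ∩ Iio γ}

section Traces

variable {D : Ordinal.{u} → Set Ordinal.{u}} {S : Set Ordinal.{u}} {c : Set Ordinal.{u}}
  {β γ : Ordinal.{u}}

theorem tracesAt_subsingleton
    (hcoh : ∀ γ γ', γ ∈ S → γ' ∈ S → ∀ β,
      IsLimPt β (D γ) → IsLimPt β (D γ') → D γ ∩ Iio β = D γ' ∩ Iio β) (γ : Ordinal.{u}) :
    (tracesAt D S γ).Subsingleton := by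
  rintro _ ⟨γ₁, hγ₁, -, hlim₁, rfl⟩ _ ⟨γ₂, hγ₂, -, hlim₂, rfl⟩
  exact hcoh γ₁ γ₂ hγ₁ hγ₂ γ hlim₁ hlim₂

theorem inter_Iio_self_mem_tracesAt (hγS : γ ∈ S) (hclub : IsClubIn (D γ) γ)
    (hγ : IsSuccLimit γ) : D γ ∩ Iio γ ∈ tracesAt D S γ :=
  ⟨γ, hγS, le_rfl, hclub.isLimPt hγ, rfl⟩

theorem inter_Iio_mem_tracesAt (hc : c ∈ tracesAt D S γ) (hβγ : β < γ) (hβ : IsLimPt β c) :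
    c ∩ Iio β ∈ tracesAt D S β := by
  obtain ⟨γ', hγ'S, hγγ', -, rfl⟩ := hc
  rw [isLimPt_inter_Iio_iff hβγ.le] at hβ
  refine ⟨γ', hγ'S, hβγ.le.trans hγγ', hβ, ?_⟩
  rw [inter_assoc, Iio_inter_Iio, min_eq_right hβγ.le]

theorem isClubIn_of_mem_tracesAt (hclub : ∀ γ' ∈ S, IsClubIn (D γ') γ')
    (hc : c ∈ tracesAt D S γ) : IsClubIn c γ := by
  obtain ⟨γ', hγ'S, hγγ', hγ, rfl⟩ := hc
  exact (hclub γ' hγ'S).inter_Iio hγγ' hγ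

theorem otp_le_of_mem_tracesAt {o : Ordinal.{u + 1}} (hotp : ∀ γ' ∈ S, otp (D γ') ≤ o)
    (hc : c ∈ tracesAt D S γ) : otp c ≤ o := by
  obtain ⟨γ', hγ'S, -, -, rfl⟩ := hc
  exact (otp_mono inter_subset_left).trans (hotp γ' hγ'S)

end Traces

theorem mk_iUnion_le_of_subsingleton {α ι : Type v} {t : ι → Set α}
    (ht : ∀ i, (t i).Subsingleton) : #(⋃ i, t i) ≤ #ι :=
  calc #(⋃ i, t i) ≤ sum fun i => #(t i) := mk_iUnion_le_sum_mk
    _ ≤ sum fun _ : ι => 1 := sum_le_sum _ _ fun i => mk_le_one_iff_set_subsingleton.2 (ht i)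
    _ = #ι := by simp

def squareIndex (ν : Cardinal.{u}) : Set (Cardinal.{u} × Ordinal.{u}) :=
  {p | p.1 < ν ∧ p.1.IsRegular ∧ p.2 < ν.ord}

theorem mk_squareIndex_le {ν : Cardinal.{u}} (hν : ℵ₀ ≤ ν) :
    #(squareIndex ν) ≤ Cardinal.lift.{u + 1} ν :=
  calc #(squareIndex ν) ≤ #(Iio ν.ord × Iio ν.ord) :=
        mk_le_of_injective (f := fun p => (⟨p.1.1.ord, ord_lt_ord.2 p.2.1⟩, ⟨p.1.2, p.2.2.2⟩))
          fun p q h => Subtype.ext (Prod.ext (ord_injective (congrArg (·.1.1) h))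
            (congrArg (·.2.1) h))
    _ = Cardinal.lift.{u + 1} ν * Cardinal.lift.{u + 1} ν := by
        simp [mk_prod, Cardinal.mk_Iio_ordinal]
    _ = Cardinal.lift.{u + 1} ν := mul_eq_self (aleph0_le_lift.2 hν)

def weakSquareFamily (ν : Cardinal.{u}) (S : Cardinal.{u} → Ordinal.{u} → Set Ordinal.{u})
    (C : Cardinal.{u} → Ordinal.{u} → Ordinal.{u} → Set Ordinal.{u}) (γ : Ordinal.{u}) :
    Set (Set Ordinal.{u}) :=
  (⋃ p : squareIndex ν, tracesAt (C p.1.1 p.1.2) (S p.1.1 p.1.2) γ) ∪ omegaClubs γ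

section WeakSquareFamily

variable {ν : Cardinal.{u}} {S : Cardinal.{u} → Ordinal.{u} → Set Ordinal.{u}}
  {C : Cardinal.{u} → Ordinal.{u} → Ordinal.{u} → Set Ordinal.{u}}
  {c : Set Ordinal.{u}} {β γ : Ordinal.{u}}

theorem mk_weakSquareFamily_le (hν : ℵ₀ ≤ ν)
    (hcoh : ∀ lam i γ γ', lam < ν → lam.IsRegular → i < ν.ord →
      γ ∈ S lam i → γ' ∈ S lam i → ∀ β,
      IsLimPt β (C lam i γ) → IsLimPt β (C lam i γ') →
      C lam i γ ∩ Iio β = C lam i γ' ∩ Iio β) (γ : Ordinal.{u}) :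
    #(weakSquareFamily ν S C γ) ≤ Cardinal.lift.{u + 1} ν := by
  have htraces := mk_iUnion_le_of_subsingleton fun p : squareIndex ν =>
    tracesAt_subsingleton (fun γ₁ γ₂ => hcoh p.1.1 p.1.2 γ₁ γ₂ p.2.1 p.2.2.1 p.2.2.2) γ
  calc #(weakSquareFamily ν S C γ) ≤ Cardinal.lift.{u + 1} ν + 1 :=
        (mk_union_le _ _).trans (add_le_add (htraces.trans (mk_squareIndex_le hν))
          (mk_le_one_iff_set_subsingleton.2 (omegaClubs_subsingleton γ)))
    _ = Cardinal.lift.{u + 1} ν := add_one_eq (aleph0_le_lift.2 hν)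

theorem isClubIn_and_otp_le_of_mem_weakSquareFamily (hν : ℵ₀ ≤ ν)
    (hclub : ∀ lam i γ, lam < ν → lam.IsRegular → i < ν.ord → γ ∈ S lam i →
      IsClubIn (C lam i γ) γ ∧ otp (C lam i γ) = Ordinal.lift.{u + 1} lam.ord)
    (hc : c ∈ weakSquareFamily ν S C γ) :
    IsClubIn c γ ∧ otp c ≤ Ordinal.lift.{u + 1} ν.ord := by
  rcases hc with hc | hc
  · obtain ⟨⟨⟨lam, i⟩, hlam, hreg, hi⟩, hc⟩ := mem_iUnion.1 hc
    have hS γ' (hγ' : γ' ∈ S lam i) := hclub lam i γ' hlam hreg hi hγ'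
    refine ⟨isClubIn_of_mem_tracesAt (fun γ' hγ' => (hS γ' hγ').1) hc,
      otp_le_of_mem_tracesAt (fun γ' hγ' => ?_) hc⟩
    rw [(hS γ' hγ').2]
    exact Ordinal.lift_le.2 (ord_le_ord.2 hlam.le)
  · refine ⟨isClubIn_of_mem_omegaClubs hc, ?_⟩
    rw [otp_eq_omega0_of_mem_omegaClubs hc, ← lift_omega0.{u + 1, u}]
    exact Ordinal.lift_le.2 (omega0_le_ord.2 hν)

theorem inter_Iio_mem_weakSquareFamily (hc : c ∈ weakSquareFamily ν S C γ) (hβγ : β < γ)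
    (hβ : IsLimPt β c) : c ∩ Iio β ∈ weakSquareFamily ν S C β := by
  rcases hc with hc | hc
  · obtain ⟨p, hc⟩ := mem_iUnion.1 hc
    exact Or.inl (mem_iUnion.2 ⟨p, inter_Iio_mem_tracesAt hc hβγ hβ⟩)
  · exact (not_isLimPt_of_mem_omegaClubs hc hβγ hβ).elim

end WeakSquareFamily

theorem stmt_4_general (ν : Cardinal.{u}) (hν : Cardinal.aleph0 ≤ ν)
    (T₀ T₁ : Set Ordinal.{u})
    (hpart : ∀ γ : Ordinal.{u}, γ < (Order.succ ν).ord → Order.IsSuccLimit γ →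
      ((γ ∈ T₀ ∨ γ ∈ T₁) ∧ ¬(γ ∈ T₀ ∧ γ ∈ T₁)))
    (hT₁ : ∀ γ ∈ T₁, Ordinal.cof γ = Cardinal.aleph0)
    (S : Cardinal.{u} → Ordinal.{u} → Set Ordinal.{u})
    (C : Cardinal.{u} → Ordinal.{u} → Ordinal.{u} → Set Ordinal.{u})
    (hclub : ∀ lam i γ, lam < ν → lam.IsRegular → i < ν.ord → γ ∈ S lam i →
      IsClubIn (C lam i γ) γ ∧ otp (C lam i γ) = Ordinal.lift.{u + 1} lam.ord)
    (hcoh : ∀ lam i γ γ', lam < ν → lam.IsRegular → i < ν.ord →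
      γ ∈ S lam i → γ' ∈ S lam i → ∀ β,
      IsLimPt β (C lam i γ) → IsLimPt β (C lam i γ') →
      C lam i γ ∩ Set.Iio β = C lam i γ' ∩ Set.Iio β)
    (hcover : ∀ γ ∈ T₀, ∃ lam i, lam < ν ∧ lam.IsRegular ∧ i < ν.ord ∧ γ ∈ S lam i) :
    ∃ 𝒞 : Ordinal.{u} → Set (Set Ordinal.{u}),
      ∀ γ : Ordinal.{u}, γ < (Order.succ ν).ord → Order.IsSuccLimit γ →
        (𝒞 γ).Nonempty ∧
        Cardinal.mk ↥(𝒞 γ) ≤ Cardinal.lift.{u + 1} ν ∧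
        (∀ c ∈ 𝒞 γ, IsClubIn c γ ∧ otp c ≤ Ordinal.lift.{u + 1} ν.ord) ∧
        (∀ c ∈ 𝒞 γ, ∀ β < γ, Order.IsSuccLimit β → IsLimPt β c → c ∩ Set.Iio β ∈ 𝒞 β) := by
  refine ⟨weakSquareFamily ν S C, fun γ hγν hγ => ⟨?_, mk_weakSquareFamily_le hν hcoh γ,
    fun c hc => isClubIn_and_otp_le_of_mem_weakSquareFamily hν hclub hc,
    fun c hc β hβγ _ hβ => inter_Iio_mem_weakSquareFamily hc hβγ hβ⟩⟩
  rcases (hpart γ hγν hγ).1 with hγ₀ | hγ₁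
  · obtain ⟨lam, i, hlam, hreg, hi, hγS⟩ := hcover γ hγ₀
    exact ⟨_, Or.inl (mem_iUnion.2 ⟨⟨(lam, i), hlam, hreg, hi⟩,
      inter_Iio_self_mem_tracesAt hγS (hclub lam i γ hlam hreg hi hγS).1 hγ⟩)⟩
  · exact ⟨_, Or.inr ⟨hT₁ γ hγ₁, rfl⟩⟩

/-- gluing partial square sequences (indexed by regular `lam < ν`
and `i < ν`) covering `T₀`, together with `ω`-sequences on the countable
cofinality part `T₁`, yields a `□*_ν`-sequence on `ν⁺`. -/
theorem stmt_4 (ν : Cardinal.{u}) (hν : Cardinal.aleph0 ≤ ν)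
    (hregsucc : (Order.succ ν).IsRegular)
    (T₀ T₁ : Set Ordinal.{u})
    (hpart : ∀ γ : Ordinal.{u}, γ < (Order.succ ν).ord → Order.IsSuccLimit γ →
      ((γ ∈ T₀ ∨ γ ∈ T₁) ∧ ¬(γ ∈ T₀ ∧ γ ∈ T₁)))
    (hT₁ : ∀ γ ∈ T₁, Ordinal.cof γ = Cardinal.aleph0)
    (S : Cardinal.{u} → Ordinal.{u} → Set Ordinal.{u})
    (C : Cardinal.{u} → Ordinal.{u} → Ordinal.{u} → Set Ordinal.{u})
    (hdom : ∀ lam i γ, lam < ν → lam.IsRegular → i < ν.ord → γ ∈ S lam i →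
      γ < (Order.succ ν).ord ∧ Order.IsSuccLimit γ)
    (hclub : ∀ lam i γ, lam < ν → lam.IsRegular → i < ν.ord → γ ∈ S lam i →
      IsClubIn (C lam i γ) γ ∧ otp (C lam i γ) = Ordinal.lift.{u + 1} lam.ord)
    (hcoh : ∀ lam i γ γ', lam < ν → lam.IsRegular → i < ν.ord →
      γ ∈ S lam i → γ' ∈ S lam i → ∀ β,
      IsLimPt β (C lam i γ) → IsLimPt β (C lam i γ') →
      C lam i γ ∩ Set.Iio β = C lam i γ' ∩ Set.Iio β)
    (hcover : ∀ γ ∈ T₀, ∃ lam i, lam < ν ∧ lam.IsRegular ∧ i < ν.ord ∧ γ ∈ S lam i) :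
    ∃ 𝒞 : Ordinal.{u} → Set (Set Ordinal.{u}),
      ∀ γ : Ordinal.{u}, γ < (Order.succ ν).ord → Order.IsSuccLimit γ →
        (𝒞 γ).Nonempty ∧
        Cardinal.mk ↥(𝒞 γ) ≤ Cardinal.lift.{u + 1} ν ∧
        (∀ c ∈ 𝒞 γ, IsClubIn c γ ∧ otp c ≤ Ordinal.lift.{u + 1} ν.ord) ∧
        (∀ c ∈ 𝒞 γ, ∀ β < γ, Order.IsSuccLimit β → IsLimPt β c → c ∩ Set.Iio β ∈ 𝒞 β) :=
  stmt_4_general ν hν T₀ T₁ hpart hT₁ S C hclub hcoh hcover
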